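/- For the binary AIFV tree T1 with Kraft-type equality (4/3)·∑_{x∈N0} 2^{-l(x)} + ∑_{x∈N1} 2^{-l(x)} = 1, the average code length satisfies L1 = ∑_x P(x)·l(x) ≥ H_2(X) + P(N0)·(2 − log_2 3), where P(N0) = ∑_{x∈N0} P(x). -/

import Mathlib

/-!
By the Kraft equality, `P̂ x = c x · 2^{-l x}` with `c = 4/3` on `N0` and `c = 1` elsewhere
is a sub-probability distribution, so Gibbs' inequality `∑ P log₂ P̂ ≤ ∑ P log₂ P` yields
`∑ P l ≥ H(P) + ∑ P log₂ c = H(P) + P(N0) · log₂ (4/3)`, and `log₂ (4/3) = 2 - log₂ 3`.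
-/

open Finset Real

lemma mul_log_le_mul_log_add_sub {p q : ℝ} (hp : 0 ≤ p) (hq : 0 < q) :
    p * log q ≤ p * log p + (q - p) := by
  rcases hp.eq_or_lt with rfl | hp
  · simpa using hq.le
  have h := mul_le_mul_of_nonneg_left (log_le_sub_one_of_pos (div_pos hq hp)) hp.le
  rw [log_div hq.ne' hp.ne', mul_sub_one, mul_div_cancel₀ _ hp.ne'] at h
  linarith

/-- **Gibbs' inequality** -/
theorem sum_mul_log_le_sum_mul_log {ι : Type*} (s : Finset ι) {p q : ι → ℝ}
    (hp : ∀ i ∈ s, 0 ≤ p i) (hq : ∀ i ∈ s, 0 < q i)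
    (hsum : ∑ i ∈ s, q i ≤ ∑ i ∈ s, p i) :
    ∑ i ∈ s, p i * log (q i) ≤ ∑ i ∈ s, p i * log (p i) := by
  have h : ∑ i ∈ s, p i * log (q i) ≤ ∑ i ∈ s, (p i * log (p i) + (q i - p i)) :=
    sum_le_sum fun i hi => mul_log_le_mul_log_add_sub (hp i hi) (hq i hi)
  rw [sum_add_distrib, sum_sub_distrib] at h
  linarith

theorem sum_mul_logb_le_sum_mul_logb {ι : Type*} (s : Finset ι) {b : ℝ} (hb : 1 < b)
    {p q : ι → ℝ} (hp : ∀ i ∈ s, 0 ≤ p i) (hq : ∀ i ∈ s, 0 < q i)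
    (hsum : ∑ i ∈ s, q i ≤ ∑ i ∈ s, p i) :
    ∑ i ∈ s, p i * logb b (q i) ≤ ∑ i ∈ s, p i * logb b (p i) := by
  simp only [logb, ← mul_div_assoc, ← sum_div]
  exact div_le_div_of_nonneg_right (sum_mul_log_le_sum_mul_log s hp hq hsum) (log_pos hb).le

theorem entropy_add_sum_mul_logb_le_sum_mul_length {ι : Type*} [Fintype ι]
    {P c : ι → ℝ} (hP : ∀ i, 0 ≤ P i) (hPsum : ∑ i, P i = 1) (hc : ∀ i, 0 < c i)
    (l : ι → ℕ) (hKraft : ∑ i, c i * ((2 : ℝ) ^ l i)⁻¹ ≤ 1) :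
    -∑ i, P i * logb 2 (P i) + ∑ i, P i * logb 2 (c i) ≤ ∑ i, P i * (l i : ℝ) := by
  have hgibbs := sum_mul_logb_le_sum_mul_logb univ one_lt_two (fun i _ => hP i)
    (fun i _ => by have := hc i; positivity) (hKraft.trans hPsum.ge)
  have hlogb : ∀ i, logb 2 (c i * ((2 : ℝ) ^ l i)⁻¹) = logb 2 (c i) - l i := fun i => by
    rw [logb_mul (hc i).ne' (by positivity), logb_inv, logb_pow, logb_self_eq_one one_lt_two,
      mul_one, sub_eq_add_neg]
  simp only [hlogb, mul_sub, sum_sub_distrib] at hgibbs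
  linarith

lemma logb_two_four_div_three : logb 2 (4 / 3) = 2 - logb 2 3 := by
  rw [logb_div (by norm_num) (by norm_num), show (4 : ℝ) = 2 ^ 2 by norm_num, logb_pow,
    logb_self_eq_one one_lt_two, mul_one, Nat.cast_ofNat]

open Finset in
theorem stmt_9_general {X : Type*} [Fintype X] [DecidableEq X]
    (N0 N1 : Finset X) (hcover : N0 ∪ N1 = Finset.univ)
    (P : X → ℝ) (hP : ∀ x, 0 ≤ P x) (hPsum : ∑ x, P x = 1)
    (l : X → ℕ)
    (hKraft : (4/3) * ∑ x ∈ N0, ((2 : ℝ) ^ (l x))⁻¹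
        + ∑ x ∈ N1, ((2 : ℝ) ^ (l x))⁻¹ = 1) :
    ∑ x, P x * (l x : ℝ) ≥
      (-∑ x, P x * Real.logb 2 (P x)) + (∑ x ∈ N0, P x) * (2 - Real.logb 2 3) := by
  let c : X → ℝ := fun x => if x ∈ N0 then 4 / 3 else 1
  have hcompl : N0ᶜ ⊆ N1 := fun x hx =>
    (mem_union.mp (hcover ▸ mem_univ x)).resolve_left (mem_compl.mp hx)
  have hweighted : ∑ x, c x * ((2 : ℝ) ^ l x)⁻¹ ≤ 1 := by
    rw [← sum_add_sum_compl N0, ← hKraft, mul_sum]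
    refine add_le_add (sum_congr rfl fun x hx => by simp [c, hx]).le ?_
    calc ∑ x ∈ N0ᶜ, c x * ((2 : ℝ) ^ l x)⁻¹ = ∑ x ∈ N0ᶜ, ((2 : ℝ) ^ l x)⁻¹ :=
          sum_congr rfl fun x hx => by simp [c, mem_compl.mp hx]
      _ ≤ ∑ x ∈ N1, ((2 : ℝ) ^ l x)⁻¹ :=
          sum_le_sum_of_subset_of_nonneg hcompl fun _ _ _ => by positivity
  have hlogb_c : ∑ x, P x * logb 2 (c x) = (∑ x ∈ N0, P x) * (2 - logb 2 3) := by
    simp [c, apply_ite, sum_mul, logb_two_four_div_three]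
  have hc : ∀ x, 0 < c x := fun x => by dsimp only [c]; split_ifs <;> norm_num
  simpa [hlogb_c] using entropy_add_sum_mul_logb_le_sum_mul_length hP hPsum hc l hweighted

open Finset in
/-- Kraft-type lower bound for the binary AIFV tree T1. -/
theorem stmt_9 {X : Type*} [Fintype X] [DecidableEq X]
    (N0 N1 : Finset X) (hdisj : Disjoint N0 N1) (hcover : N0 ∪ N1 = Finset.univ)
    (P : X → ℝ) (hP : ∀ x, 0 ≤ P x) (hPsum : ∑ x, P x = 1)
    (l : X → ℕ)
    (hKraft : (4/3) * ∑ x ∈ N0, ((2 : ℝ) ^ (l x))⁻¹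
        + ∑ x ∈ N1, ((2 : ℝ) ^ (l x))⁻¹ = 1) :
    ∑ x, P x * (l x : ℝ) ≥
      (-∑ x, P x * Real.logb 2 (P x)) + (∑ x ∈ N0, P x) * (2 - Real.logb 2 3) :=
  stmt_9_general N0 N1 hcover P hP hPsum l hKraft
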